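/- Let Φ be a finite reduced crystallographic irreducible root system in a finite-dimensional real inner product space with a fixed base Δ, and let T be a closed subset of Φ such that the closure [T ∪ −T] is a proper subset of Φ. Then for any simple root α ∈ Δ with α ∈ [T ∪ −T], there exists a simple root path (β₁, β₂, …, β_k) in Δ with β₁ = α, with βᵢ ∈ [T ∪ −T] for all 1 ≤ i ≤ k−1, and with β_k ∉ [T ∪ −T]. -/

import Mathlib

/-!
The closure `C = [T ∪ -T]` is closed and stable under negation. Every positive root is obtained
from a simple root by adding simple roots one at a time through positive roots, so if `C`
contained `Δ` it would contain all of `Φ`; hence some simple root `γ` lies outside `C`.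
Irreducibility makes the Dynkin graph on `Δ` connected: an orthogonal splitting
`Δ = A ⊔ (Δ \ A)` would force every root into `span A` or `span (Δ \ A)`. Cutting a path
from `α` to `γ` at its first vertex outside `C` gives the required simple root path.
-/

open scoped RealInnerProductSpace

/-- A finite reduced crystallographic root system in a finite-dimensional real
inner product space. -/
structure IsRootSystem {V : Type*} [NormedAddCommGroup V] [InnerProductSpace ℝ V]
    [FiniteDimensional ℝ V] (Φ : Set V) : Prop where
  finite : Φ.Finite
  ne_zero : ∀ α ∈ Φ, α ≠ 0
  spans : Submodule.span ℝ Φ = ⊤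
  reduced : ∀ α ∈ Φ, ∀ t : ℝ, t • α ∈ Φ → t = 1 ∨ t = -1
  reflection_mem : ∀ α ∈ Φ, ∀ β ∈ Φ, β - (2 * ⟪β, α⟫ / ⟪α, α⟫) • α ∈ Φ
  crystallographic : ∀ α ∈ Φ, ∀ β ∈ Φ, ∃ n : ℤ, 2 * ⟪β, α⟫ / ⟪α, α⟫ = (n : ℝ)

/-- A subset `S` of a root system `Φ` is closed if for any `x, y ∈ S`,
`x + y ∈ Φ` implies `x + y ∈ S`. -/
def IsClosedSubset {V : Type*} [NormedAddCommGroup V] [InnerProductSpace ℝ V]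
    (Φ S : Set V) : Prop :=
  S ⊆ Φ ∧ ∀ x ∈ S, ∀ y ∈ S, x + y ∈ Φ → x + y ∈ S

/-- The closure `[S]` of `S ⊆ Φ`: the smallest closed subset of `Φ` containing `S`,
i.e. the intersection of all closed subsets of `Φ` containing `S`. -/
def rootClosure {V : Type*} [NormedAddCommGroup V] [InnerProductSpace ℝ V]
    (Φ S : Set V) : Set V :=
  ⋂₀ {U : Set V | IsClosedSubset Φ U ∧ S ⊆ U}

/-- A base (set of simple roots) of a root system `Φ`: a linearly independent
subset such that every root is an integer combination of elements of `Δ` with all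
coefficients of the same sign. -/
def IsBase {V : Type*} [NormedAddCommGroup V] [InnerProductSpace ℝ V]
    (Φ Δ : Set V) : Prop :=
  Δ ⊆ Φ ∧ LinearIndependent ℝ ((↑) : Δ → V) ∧
    ∀ α ∈ Φ, ∃ c : V →₀ ℤ, (c.support : Set V) ⊆ Δ ∧
      α = c.sum (fun v n => (n : ℝ) • v) ∧ ((∀ v, 0 ≤ c v) ∨ (∀ v, c v ≤ 0))

/-- A root system is irreducible if it cannot be partitioned into two nonempty
orthogonal subsets. -/
def IsIrreducibleRootSystem {V : Type*} [NormedAddCommGroup V] [InnerProductSpace ℝ V]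
    (Φ : Set V) : Prop :=
  ¬ ∃ S T : Set V, S.Nonempty ∧ T.Nonempty ∧ Φ = S ∪ T ∧
      ∀ x ∈ S, ∀ y ∈ T, ⟪x, y⟫ = 0

/-- A simple root path: a finite sequence `β 0, β 1, …, β (k-1)` of pairwise
distinct simple roots in `Δ` such that consecutive roots are non-orthogonal. -/
def IsSimpleRootPath {V : Type*} [NormedAddCommGroup V] [InnerProductSpace ℝ V]
    (Δ : Set V) (k : ℕ) (β : ℕ → V) : Prop :=
  1 ≤ k ∧ (∀ i < k, β i ∈ Δ) ∧ (∀ i < k, ∀ j < k, β i = β j → i = j) ∧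
    ∀ i, i + 1 < k → ⟪β i, β (i + 1)⟫ ≠ 0


namespace IsRootSystem

variable {V : Type*} [NormedAddCommGroup V] [InnerProductSpace ℝ V] [FiniteDimensional ℝ V]
  {Φ : Set V} (hΦ : IsRootSystem Φ) {α β : V}
include hΦ

lemma inner_self_pos (hα : α ∈ Φ) : 0 < ⟪α, α⟫ :=
  real_inner_self_pos.2 (hΦ.ne_zero α hα)

lemma neg_mem (hα : α ∈ Φ) : -α ∈ Φ := by
  have h := hΦ.reflection_mem α hα α hα
  rw [mul_div_assoc, div_self (hΦ.inner_self_pos hα).ne', mul_one] at h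
  convert h using 1
  module

lemma sub_mem_of_inner_eq_zero (hβ : β ∈ Φ) (h : ⟪α, β⟫ = 0) (hαβ : α + β ∈ Φ) :
    α - β ∈ Φ := by
  have hr := hΦ.reflection_mem β hβ _ hαβ
  rw [inner_add_left, h, zero_add, mul_div_assoc, div_self (hΦ.inner_self_pos hβ).ne',
    mul_one] at hr
  convert hr using 1
  module

lemma inner_lt_norm_mul_norm (hα : α ∈ Φ) (hβ : β ∈ Φ) (hne : α ≠ β) :
    ⟪α, β⟫ < ‖α‖ * ‖β‖ := by
  rw [inner_lt_norm_mul_iff_real]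
  intro h
  have hα0 : 0 < ‖α‖ := norm_pos_iff.2 (hΦ.ne_zero α hα)
  have hβ0 : 0 < ‖β‖ := norm_pos_iff.2 (hΦ.ne_zero β hβ)
  have hβα : (‖β‖ / ‖α‖) • α = β := by
    rw [div_eq_inv_mul, mul_smul, h, smul_smul, inv_mul_cancel₀ hα0.ne', one_smul]
  rcases hΦ.reduced α hα _ (hβα ▸ hβ) with h1 | h1
  · exact hne (by rw [← hβα, h1, one_smul])
  · have : 0 < ‖β‖ / ‖α‖ := by positivity
    linarith

lemma sub_mem_of_inner_pos (hα : α ∈ Φ) (hβ : β ∈ Φ) (hpos : 0 < ⟪α, β⟫) (hne : α ≠ β) :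
    α - β ∈ Φ := by
  obtain ⟨m, hm⟩ := hΦ.crystallographic β hβ α hα
  obtain ⟨n, hn⟩ := hΦ.crystallographic α hα β hβ
  have hn' : 2 * ⟪α, β⟫ / ⟪α, α⟫ = n := by rw [real_inner_comm]; exact hn
  have hαα := hΦ.inner_self_pos hα
  have hββ := hΦ.inner_self_pos hβ
  have hm0 : 0 < m := by exact_mod_cast hm ▸ (by positivity : 0 < 2 * ⟪α, β⟫ / ⟪β, β⟫)
  have hn0 : 0 < n := by exact_mod_cast hn' ▸ (by positivity : 0 < 2 * ⟪α, β⟫ / ⟪α, α⟫)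
  -- strict Cauchy–Schwarz bounds the product of the two Cartan integers by 4
  have hmn : m * n < 4 := by
    have hCS := hΦ.inner_lt_norm_mul_norm hα hβ hne
    have key : (m * n : ℝ) < 4 := by
      rw [← hm, ← hn', div_mul_div_comm, div_lt_iff₀ (by positivity),
        real_inner_self_eq_norm_sq, real_inner_self_eq_norm_sq]
      nlinarith
    exact_mod_cast key
  obtain rfl | rfl : m = 1 ∨ n = 1 := by
    by_contra! h
    have : 2 ≤ m := by omega
    have : 2 ≤ n := by omega
    nlinarith
  · have h := hΦ.reflection_mem β hβ α hα
    rwa [hm, Int.cast_one, one_smul] at h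
  · have h := hΦ.neg_mem (hΦ.reflection_mem α hα β hβ)
    rwa [hn, Int.cast_one, one_smul, neg_sub] at h

end IsRootSystem

section PositiveCone

variable {V : Type*} [AddCommGroup V] [Module ℝ V] {Δ : Set V} {χ : V →ₗ[ℝ] ℝ} {x : V}

lemma LinearMap.map_nonneg_of_mem_addSubmonoidClosure (h : ∀ v ∈ Δ, 0 ≤ χ v)
    (hx : x ∈ AddSubmonoid.closure Δ) : 0 ≤ χ x := by
  induction hx using AddSubmonoid.closure_induction with
  | mem v hv => exact h v hv
  | zero => simp
  | add y z _ _ hy hz => rw [map_add]; positivity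

lemma LinearMap.map_pos_of_mem_addSubmonoidClosure (h : ∀ v ∈ Δ, 0 < χ v)
    (hx : x ∈ AddSubmonoid.closure Δ) (hx0 : x ≠ 0) : 0 < χ x := by
  suffices x = 0 ∨ 0 < χ x from this.resolve_left hx0
  clear hx0
  induction hx using AddSubmonoid.closure_induction with
  | mem v hv => exact Or.inr (h v hv)
  | zero => exact Or.inl rfl
  | add y z _ _ hy hz =>
    rcases hy with rfl | hy
    · simpa using hz
    rcases hz with rfl | hz
    · simp [hy]
    · exact Or.inr (by rw [map_add]; positivity)

lemma LinearIndependent.exists_linearMap_eqOn (hli : LinearIndependent ℝ ((↑) : Δ → V))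
    (w : V → ℝ) : ∃ χ : V →ₗ[ℝ] ℝ, ∀ v ∈ Δ, χ v = w v := by
  have hli : LinearIndepOn ℝ id Δ := hli
  refine ⟨(Module.Basis.extend hli).constr ℝ fun i => w i, fun v hv => ?_⟩
  have hb : Module.Basis.extend hli ⟨v, hli.subset_extend _ hv⟩ = v :=
    Module.Basis.extend_apply_self hli _
  conv_lhs => rw [← hb]
  rw [Module.Basis.constr_basis]

end PositiveCone

namespace IsBase

variable {V : Type*} [NormedAddCommGroup V] [InnerProductSpace ℝ V] {Φ Δ : Set V}

lemma mem_closure_or_neg_mem_closure (hΔ : IsBase Φ Δ) {α : V} (hα : α ∈ Φ) :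
    α ∈ AddSubmonoid.closure Δ ∨ -α ∈ AddSubmonoid.closure Δ := by
  have sum_mem (s : Finset V) (f : V → ℤ) (hs : ↑s ⊆ Δ) (hf : ∀ v, 0 ≤ f v) :
      ∑ v ∈ s, (f v : ℝ) • v ∈ AddSubmonoid.closure Δ := by
    refine AddSubmonoid.sum_mem _ fun v hv => ?_
    rw [← Int.toNat_of_nonneg (hf v), Int.cast_natCast, Nat.cast_smul_eq_nsmul]
    exact AddSubmonoid.nsmul_mem _ (AddSubmonoid.subset_closure (hs hv)) _
  obtain ⟨c, hc, rfl, hpos | hneg⟩ := hΔ.2.2 α hα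
  · exact Or.inl (sum_mem _ c hc hpos)
  · refine Or.inr ?_
    convert sum_mem _ (-c) hc fun v => neg_nonneg.2 (hneg v) using 1
    simp [Finsupp.sum, ← Finset.sum_neg_distrib]

variable [FiniteDimensional ℝ V] (hΦ : IsRootSystem Φ) (hΔ : IsBase Φ Δ)
include hΦ hΔ

theorem induction_on_pos {p : V → Prop}
    (simple : ∀ β ∈ Δ, p β)
    (add : ∀ α ∈ Φ, α ∈ AddSubmonoid.closure Δ → ∀ β ∈ Δ, α + β ∈ Φ → p α → p (α + β))
    {α : V} (hα : α ∈ Φ) (hpos : α ∈ AddSubmonoid.closure Δ) : p α := by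
  classical
  obtain ⟨s, hsΔ, rfl⟩ := AddSubmonoid.exists_multiset_of_mem_closure hpos
  clear hpos
  induction s using Multiset.strongInductionOn with
  | ih s ih =>
  by_cases hs : s.sum ∈ Δ
  · exact simple _ hs
  obtain ⟨β, hβs, hβ⟩ : ∃ β ∈ s, 0 < ⟪s.sum, β⟫ := by
    by_contra! h
    have hle : ⟪s.sum, s.sum⟫ ≤ 0 := by
      rw [← innerₛₗ_apply_apply, map_multiset_sum]
      simpa using Multiset.sum_le_card_nsmul (s.map (innerₛₗ ℝ s.sum)) 0 (by simpa using h)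
    exact (hΦ.inner_self_pos hα).not_ge hle
  have hβΔ := hsΔ β hβs
  have herase : (s.erase β).sum = s.sum - β := eq_sub_of_add_eq' (Multiset.sum_erase hβs)
  have hsub : s.sum - β ∈ Φ :=
    hΦ.sub_mem_of_inner_pos hα (hΔ.1 hβΔ) hβ (fun h => hs (h ▸ hβΔ))
  have hmem (x) (hx : x ∈ s.erase β) : x ∈ Δ := hsΔ x (Multiset.mem_of_mem_erase hx)
  have hp := add _ hsub (herase ▸ AddSubmonoid.multiset_sum_mem _ _ fun x hx =>
    AddSubmonoid.subset_closure (hmem x hx)) β hβΔ (by rwa [sub_add_cancel])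
    (herase ▸ ih _ (Multiset.erase_lt.2 hβs) hmem (herase ▸ hsub))
  rwa [sub_add_cancel] at hp

theorem subset_of_isClosedSubset {C : Set V} (hC : IsClosedSubset Φ C)
    (hneg : ∀ x ∈ C, -x ∈ C) (hΔC : Δ ⊆ C) : Φ ⊆ C := by
  have hpos : ∀ α ∈ Φ, α ∈ AddSubmonoid.closure Δ → α ∈ C := fun α hα =>
    hΔ.induction_on_pos hΦ hΔC (fun α _ _ β hβ hαβ hαC => hC.2 α hαC β (hΔC hβ) hαβ) hα
  intro α hα
  rcases hΔ.mem_closure_or_neg_mem_closure hα with h | h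
  · exact hpos α hα h
  · simpa using hneg _ (hpos _ (hΦ.neg_mem hα) h)

/-- A positive root in the span of `A ⊆ Δ` cannot be extended by a simple root `β ∉ A`
orthogonal to `A`: otherwise the reflection in `β` would produce the root `α - β`, whose
coordinates have mixed signs. -/
theorem add_notMem_of_mem_span {A : Set V} (hA : A ⊆ Δ) {α β : V} (hα : α ∈ Φ)
    (hpos : α ∈ AddSubmonoid.closure Δ) (hαA : α ∈ Submodule.span ℝ A) (hβ : β ∈ Δ)
    (hβA : β ∉ A) (horth : ∀ x ∈ A, ⟪x, β⟫ = 0) : α + β ∉ Φ := by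
  intro hαβ
  have vanish (χ : V →ₗ[ℝ] ℝ) (hχ : ∀ x ∈ A, χ x = 0) : χ α = 0 :=
    (Submodule.span_le (p := LinearMap.ker χ)).2 hχ hαA
  have hαβ0 : ⟪α, β⟫ = 0 := by
    simpa [real_inner_comm] using
      vanish (innerₛₗ ℝ β) fun x hx => by simpa [real_inner_comm] using horth x hx
  have hsub : α - β ∈ Φ := hΦ.sub_mem_of_inner_eq_zero (hΔ.1 hβ) hαβ0 hαβ
  rcases hΔ.mem_closure_or_neg_mem_closure hsub with h | h
  · -- the `β`-coordinate of `α - β` is `-1`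
    obtain ⟨χ, hχ⟩ := hΔ.2.1.exists_linearMap_eqOn (Set.indicator {β} 1)
    have hχα : χ α = 0 := vanish χ fun x hx => by
      rw [hχ x (hA hx), Set.indicator_of_notMem (by rintro rfl; exact hβA hx)]
    have := χ.map_nonneg_of_mem_addSubmonoidClosure
      (fun v hv => by rw [hχ v hv]; exact Set.indicator_nonneg (by simp) v) h
    rw [map_sub, hχα, hχ β hβ, Set.indicator_of_mem (Set.mem_singleton β)] at this
    norm_num at this
  · -- `α - β` is negative, yet its coordinates on `A` add up to the height of `α`
    obtain ⟨χA, hχA⟩ := hΔ.2.1.exists_linearMap_eqOn (Set.indicator A 1)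
    obtain ⟨χ, hχ⟩ := hΔ.2.1.exists_linearMap_eqOn 1
    have hAα : χA α = χ α := by
      simpa [sub_eq_zero] using vanish (χA - χ) fun x hx => by
        simp [hχA x (hA hx), hχ x (hA hx), Set.indicator_of_mem hx]
    have hχα : 0 < χ α := χ.map_pos_of_mem_addSubmonoidClosure
      (fun v hv => by simp [hχ v hv]) hpos (hΦ.ne_zero α hα)
    have := χA.map_nonneg_of_mem_addSubmonoidClosure
      (fun v hv => by rw [hχA v hv]; exact Set.indicator_nonneg (by simp) v) h
    rw [neg_sub, map_sub, hχA β hβ, Set.indicator_of_notMem hβA, hAα] at this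
    linarith

theorem mem_span_or_mem_span {A : Set V} (hA : A ⊆ Δ)
    (horth : ∀ x ∈ A, ∀ y ∈ Δ \ A, ⟪x, y⟫ = 0) {α : V} (hα : α ∈ Φ) :
    α ∈ Submodule.span ℝ A ∨ α ∈ Submodule.span ℝ (Δ \ A) := by
  suffices hpos : ∀ α ∈ Φ, α ∈ AddSubmonoid.closure Δ →
      α ∈ Submodule.span ℝ A ∨ α ∈ Submodule.span ℝ (Δ \ A) by
    rcases hΔ.mem_closure_or_neg_mem_closure hα with h | h
    · exact hpos α hα h
    · simpa using hpos _ (hΦ.neg_mem hα) h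
  refine fun α hα hpos => hΔ.induction_on_pos hΦ
    (p := fun α => α ∈ Submodule.span ℝ A ∨ α ∈ Submodule.span ℝ (Δ \ A))
    (fun β hβ => ?_) (fun α hα hpos β hβ hαβ ih => ?_) hα hpos
  · by_cases hβA : β ∈ A
    · exact Or.inl (Submodule.subset_span hβA)
    · exact Or.inr (Submodule.subset_span ⟨hβ, hβA⟩)
  by_cases hβA : β ∈ A
  · refine ih.imp (fun h => add_mem h (Submodule.subset_span hβA)) fun h => ?_
    exact absurd hαβ (hΔ.add_notMem_of_mem_span hΦ Set.sdiff_subset hα hpos h hβ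
      (fun h => h.2 hβA) fun x hx => by rw [real_inner_comm]; exact horth β hβA x hx)
  · refine ih.imp (fun h => ?_) fun h => add_mem h (Submodule.subset_span ⟨hβ, hβA⟩)
    exact absurd hαβ (hΔ.add_notMem_of_mem_span hΦ hA hα hpos h hβ hβA
      fun x hx => horth x hx β ⟨hβ, hβA⟩)

end IsBase

section DynkinGraph

variable {V : Type*} [NormedAddCommGroup V] [InnerProductSpace ℝ V]

def dynkinGraph (Δ : Set V) : SimpleGraph Δ where
  Adj u v := u ≠ v ∧ ⟪(u : V), v⟫ ≠ 0
  symm := ⟨fun _ _ h => ⟨h.1.symm, by rw [real_inner_comm]; exact h.2⟩⟩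
  loopless := ⟨fun _ h => h.1 rfl⟩

theorem IsBase.dynkinGraph_preconnected [FiniteDimensional ℝ V] {Φ Δ : Set V}
    (hΦ : IsRootSystem Φ) (hirr : IsIrreducibleRootSystem Φ) (hΔ : IsBase Φ Δ) :
    (dynkinGraph Δ).Preconnected := by
  intro u v
  by_contra huv
  set A : Set V := Subtype.val '' {w | (dynkinGraph Δ).Reachable u w}
  have hvA : (v : V) ∉ A := by
    rintro ⟨w, hw, hwv⟩
    exact huv (Subtype.ext hwv ▸ hw)
  have horth : ∀ x ∈ A, ∀ y ∈ Δ \ A, ⟪x, y⟫ = 0 := by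
    rintro _ ⟨x, hx, rfl⟩ y ⟨hy, hyA⟩
    by_contra hxy
    have hadj : (dynkinGraph Δ).Adj x ⟨y, hy⟩ := ⟨fun h => hyA ⟨x, hx, by rw [h]⟩, hxy⟩
    exact hyA ⟨_, hx.trans hadj.reachable, rfl⟩
  have hA : A ⊆ Δ := by
    rintro _ ⟨w, -, rfl⟩
    exact w.2
  refine hirr ⟨Φ ∩ Submodule.span ℝ A, Φ ∩ Submodule.span ℝ (Δ \ A),
    ⟨u, hΔ.1 u.2, Submodule.subset_span ⟨u, .rfl, rfl⟩⟩,
    ⟨v, hΔ.1 v.2, Submodule.subset_span ⟨v.2, hvA⟩⟩, ?_, ?_⟩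
  · ext α
    refine ⟨fun hα => ?_, fun hα => hα.elim (·.1) (·.1)⟩
    exact (hΔ.mem_span_or_mem_span hΦ hA horth hα).imp (⟨hα, ·⟩) (⟨hα, ·⟩)
  · rintro x ⟨-, hx⟩ y ⟨-, hy⟩
    exact (Submodule.isOrtho_span.2 horth).inner_eq hx hy

theorem SimpleGraph.Walk.IsPath.isSimpleRootPath {Δ : Set V} {a b : Δ}
    {q : (dynkinGraph Δ).Walk a b} (hq : q.IsPath) :
    IsSimpleRootPath Δ (q.length + 1) fun i => q.getVert i :=
  ⟨by omega, fun i _ => (q.getVert i).2,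
    fun i hi j hj hij => hq.getVert_injOn (by simp; omega) (by simp; omega) (Subtype.ext hij),
    fun i hi => (q.adj_getVert_succ (by omega)).2⟩

end DynkinGraph

theorem SimpleGraph.Walk.exists_isPath_of_mem_of_notMem {W : Type*} {G : SimpleGraph W}
    {S : Set W} {a b : W} (w : G.Walk a b) (ha : a ∈ S) (hb : b ∉ S) :
    ∃ c, ∃ q : G.Walk a c, q.IsPath ∧ c ∉ S ∧ ∀ x ∈ q.support, x ≠ c → x ∈ S := by
  classical
  induction w with
  | nil => exact absurd ha hb
  | @cons a x b h p ih =>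
    by_cases hx : x ∈ S
    · obtain ⟨c, q, -, hc, hqS⟩ := ih hx hb
      refine ⟨c, (cons h q).bypass, bypass_isPath _, hc, fun z hz hzc => ?_⟩
      rcases List.mem_cons.1 (support_bypass_subset_support _ hz) with rfl | hz
      · exact ha
      · exact hqS z hz hzc
    · refine ⟨x, cons h nil, by simp [h.ne], hx, fun z hz hzx => ?_⟩
      rcases List.mem_cons.1 hz with rfl | hz
      · exact ha
      · exact absurd (by simpa using hz) hzx

section RootClosure

variable {V : Type*} [NormedAddCommGroup V] [InnerProductSpace ℝ V] {Φ S U : Set V}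

lemma IsClosedSubset.neg (hΦ : ∀ x ∈ Φ, -x ∈ Φ) (hU : IsClosedSubset Φ U) :
    IsClosedSubset Φ (-U) :=
  ⟨fun x hx => by simpa using hΦ _ (hU.1 hx), fun x hx y hy hxy => by
    simpa [add_comm] using hU.2 _ hx _ hy (by simpa [add_comm] using hΦ _ hxy)⟩

lemma isClosedSubset_rootClosure (h : rootClosure Φ S ⊆ Φ) :
    IsClosedSubset Φ (rootClosure Φ S) :=
  ⟨h, fun x hx y hy hxy => Set.mem_sInter.2 fun U hU =>
    hU.1.2 x (Set.mem_sInter.1 hx U hU) y (Set.mem_sInter.1 hy U hU) hxy⟩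

lemma neg_mem_rootClosure_neg (hΦ : ∀ x ∈ Φ, -x ∈ Φ) {x : V} (hx : x ∈ rootClosure Φ S) :
    -x ∈ rootClosure Φ (-S) :=
  Set.mem_sInter.2 fun U hU =>
    Set.mem_neg.1 (Set.mem_sInter.1 hx (-U) ⟨hU.1.neg hΦ, Set.neg_subset.1 hU.2⟩)

end RootClosure

theorem exists_simpleRootPath_escaping_closure_general {V : Type*} [NormedAddCommGroup V]
    [InnerProductSpace ℝ V] [FiniteDimensional ℝ V] (Φ Δ T : Set V)
    (hΦ : IsRootSystem Φ) (hirr : IsIrreducibleRootSystem Φ) (hΔ : IsBase Φ Δ)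
    (hproper : rootClosure Φ (T ∪ -T) ⊂ Φ)
    (α : V) (hα : α ∈ Δ) (hαT : α ∈ rootClosure Φ (T ∪ -T)) :
    ∃ (k : ℕ) (β : ℕ → V), IsSimpleRootPath Δ k β ∧ β 0 = α ∧
      (∀ i, i + 1 < k → β i ∈ rootClosure Φ (T ∪ -T)) ∧
      β (k - 1) ∉ rootClosure Φ (T ∪ -T) := by
  set C := rootClosure Φ (T ∪ -T)
  have hCneg : ∀ x ∈ C, -x ∈ C := fun x hx => by
    simpa [Set.union_comm] using neg_mem_rootClosure_neg (fun _ => hΦ.neg_mem) hx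
  obtain ⟨γ, hγ, hγC⟩ : ∃ γ ∈ Δ, γ ∉ C := by
    by_contra! hΔC
    exact hproper.2 <|
      hΔ.subset_of_isClosedSubset hΦ (isClosedSubset_rootClosure hproper.1) hCneg hΔC
  obtain ⟨w⟩ := hΔ.dynkinGraph_preconnected hΦ hirr ⟨α, hα⟩ ⟨γ, hγ⟩
  obtain ⟨c, q, hq, hc, hqC⟩ :=
    w.exists_isPath_of_mem_of_notMem (S := {x : Δ | (x : V) ∈ C}) hαT hγC
  refine ⟨q.length + 1, fun i => q.getVert i, hq.isSimpleRootPath, by simp, fun i hi => ?_,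
    by simpa using hc⟩
  refine hqC _ (q.getVert_mem_support i) fun h => ?_
  have := hq.getVert_injOn (by simp; omega) (by simp) (h.trans q.getVert_length.symm)
  omega

/-- If `[T ∪ -T]` is a proper subset of `Φ` and the simple root `α` lies in
`[T ∪ -T]`, then there is a simple root path starting at `α`, staying in `[T ∪ -T]`
except at its last vertex, whose last vertex lies outside `[T ∪ -T]`. -/
theorem exists_simpleRootPath_escaping_closure {V : Type*} [NormedAddCommGroup V]
    [InnerProductSpace ℝ V] [FiniteDimensional ℝ V] (Φ Δ T : Set V)
    (hΦ : IsRootSystem Φ) (hirr : IsIrreducibleRootSystem Φ) (hΔ : IsBase Φ Δ)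
    (hT : IsClosedSubset Φ T) (hproper : rootClosure Φ (T ∪ -T) ⊂ Φ)
    (α : V) (hα : α ∈ Δ) (hαT : α ∈ rootClosure Φ (T ∪ -T)) :
    ∃ (k : ℕ) (β : ℕ → V), IsSimpleRootPath Δ k β ∧ β 0 = α ∧
      (∀ i, i + 1 < k → β i ∈ rootClosure Φ (T ∪ -T)) ∧
      β (k - 1) ∉ rootClosure Φ (T ∪ -T) :=
  exists_simpleRootPath_escaping_closure_general Φ Δ T hΦ hirr hΔ hproper α hα hαT
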